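/- arXiv:1107.2034 — 4 statements merged into one kernel-verified Lean document; each statement's English description precedes it below -/
import Mathlib

section
/- Let a, b, d ∈ ℤ, let ε ∈ {1, -1}, and set c = b + 1. In the ring ℤ[t, t⁻¹] of Laurent polynomials over ℤ, define Δ(t) = a·d·(1 - t)² - (b - c·t)·(c - t·b) and Δ'(t) = (a - ε)·d·(1 - t)² - (b - c·t)·(c - t·b). If Δ and Δ' are associated in ℤ[t, t⁻¹] (i.e., Δ = u·Δ' for some unit u of ℤ[t, t⁻¹]), then d = 0. -/
open LaurentPolynomial

noncomputable def ev (u : ℤˣ) : ℤ[T;T⁻¹] →ₐ[ℤ] ℤ :=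
  AddMonoidAlgebra.lift ℤ ℤ ℤ ((Units.coeHom ℤ).comp (zpowersHom ℤˣ u))

lemma ev_C (u : ℤˣ) (r : ℤ) : ev u (C r) = r := by
  simp [ev, LaurentPolynomial.C, AddMonoidAlgebra.lift_single]

lemma ev_T (u : ℤˣ) (n : ℤ) : ev u (T n) = ((u ^ n : ℤˣ) : ℤ) := by
  rw [ev, LaurentPolynomial.T, AddMonoidAlgebra.lift_single]
  simp [zpowersHom_apply]

/-- If the Alexander polynomials `Δ(t) = ad(1-t)² - (b-ct)(c-tb)` and
`Δ'(t) = (a-ε)d(1-t)² - (b-ct)(c-tb)`, with `c = b+1` and `ε = ±1`, are associated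
in `ℤ[t,t⁻¹]` (unit multiples of each other), then `d = 0`. -/
theorem d_eq_zero_of_alexander_assoc (a b c d ε : ℤ) (hε : ε = 1 ∨ ε = -1)
    (hc : c = b + 1)
    (h : Associated
      (C (a * d) * (1 - T 1) ^ 2 - (C b - C c * T 1) * (C c - T 1 * C b) : ℤ[T;T⁻¹])
      (C ((a - ε) * d) * (1 - T 1) ^ 2 - (C b - C c * T 1) * (C c - T 1 * C b))) :
    d = 0 := by
  obtain ⟨u, hu⟩ := h
  have h2 := congrArg (ev (-1)) hu
  have hT : ev (-1) (T 1) = -1 := by rw [ev_T]; simp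
  simp only [map_mul, map_sub, map_pow, map_one, ev_C, hT] at h2
  have hs : IsUnit (ev (-1) (u : ℤ[T;T⁻¹])) := u.isUnit.map (ev (-1))
  rw [Int.isUnit_iff] at hs
  subst hc
  rcases hs with hs1 | hs1 <;> rw [hs1] at h2 <;> ring_nf at h2
  · rcases hε with rfl | rfl <;> omega
  · have h4 : Even ((2*b+1)^2) := ⟨(2*a-ε)*d, by ring_nf; linarith⟩
    rw [Int.even_pow] at h4
    obtain ⟨⟨r, hr⟩, -⟩ := h4
    omega
end

section
/- Let a, b ∈ ℤ and let ε ∈ {1, -1}. Let H be the cokernel of the ℤ-linear map ℤ² → ℤ² with matrix [[2a, 2b+1], [2b+1, 0]] and let H' be the cokernel of the ℤ-linear map ℤ² → ℤ² with matrix [[2a - 2ε, 2b+1], [2b+1, 0]]. If H and H' are isomorphic as additive groups, then H is a finite cyclic group (of order (2b+1)²). -/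
/-- The cokernel of the `ℤ`-linear map `ℤ² → ℤ²` determined by a 2×2 integer matrix `M`,
i.e. the abelian group presented by two generators subject to the relations given by the
rows of `M` (the matrices considered here are symmetric). -/
abbrev intCoker (M : Matrix (Fin 2) (Fin 2) ℤ) : Type :=
  (Fin 2 → ℤ) ⧸ LinearMap.range (Matrix.toLin' M)

lemma range_toLin'_mul_right (M V W : Matrix (Fin 2) (Fin 2) ℤ) (hVW : V * W = 1) :
    LinearMap.range (Matrix.toLin' (M * V)) = LinearMap.range (Matrix.toLin' M) := by
  rw [Matrix.toLin'_mul]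
  apply LinearMap.range_comp_of_range_eq_top
  rw [LinearMap.range_eq_top]
  intro v
  exact ⟨Matrix.toLin' W v, by
    rw [← LinearMap.comp_apply, ← Matrix.toLin'_mul, hVW, Matrix.toLin'_one]; rfl⟩

noncomputable def cokerEquiv (M N U V U' V' : Matrix (Fin 2) (Fin 2) ℤ)
    (hU : U * U' = 1) (hU' : U' * U = 1) (hV : V * V' = 1)
    (hN : U * M * V = N) : intCoker M ≃ₗ[ℤ] intCoker N := by
  refine Submodule.Quotient.equiv _ _
    (LinearEquiv.ofLinear (Matrix.toLin' U) (Matrix.toLin' U')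
      (by rw [← Matrix.toLin'_mul, hU, Matrix.toLin'_one])
      (by rw [← Matrix.toLin'_mul, hU', Matrix.toLin'_one])) ?_
  show Submodule.map (Matrix.toLin' U) _ = _
  rw [← LinearMap.range_comp, ← Matrix.toLin'_mul, ← hN, range_toLin'_mul_right _ V V' hV]

noncomputable def cokerDiagEquiv (d₁ d₂ : ℤ) :
    intCoker !![d₁, 0; 0, d₂] ≃ₗ[ℤ] (ZMod d₁.natAbs × ZMod d₂.natAbs) := by
  let f : (Fin 2 → ℤ) →ₗ[ℤ] ZMod d₁.natAbs × ZMod d₂.natAbs :=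
    LinearMap.prod
      ((Int.castAddHom (ZMod d₁.natAbs)).toIntLinearMap.comp (LinearMap.proj 0))
      ((Int.castAddHom (ZMod d₂.natAbs)).toIntLinearMap.comp (LinearMap.proj 1))
  have hval : ∀ v : Fin 2 → ℤ, f v = (((v 0 : ℤ) : ZMod d₁.natAbs), ((v 1 : ℤ) : ZMod d₂.natAbs)) :=
    fun v => rfl
  have hmv : ∀ w : Fin 2 → ℤ, Matrix.toLin' !![d₁, 0; 0, d₂] w = ![d₁ * w 0, d₂ * w 1] := by
    intro w
    funext i
    fin_cases i <;>
      simp [Matrix.toLin'_apply, Matrix.mulVec, dotProduct, Fin.sum_univ_two]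
  have hker : LinearMap.range (Matrix.toLin' !![d₁, 0; 0, d₂]) = LinearMap.ker f := by
    ext v
    simp only [LinearMap.mem_range, LinearMap.mem_ker]
    constructor
    · rintro ⟨w, rfl⟩
      rw [hmv, hval]
      simp only [Matrix.cons_val_zero, Matrix.cons_val_one, Matrix.head_cons]
      rw [Prod.mk_eq_zero]
      constructor
      · rw [ZMod.intCast_zmod_eq_zero_iff_dvd]
        exact Int.natAbs_dvd.mpr (dvd_mul_right _ _)
      · rw [ZMod.intCast_zmod_eq_zero_iff_dvd]
        exact Int.natAbs_dvd.mpr (dvd_mul_right _ _)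
    · intro hv
      rw [hval, Prod.mk_eq_zero] at hv
      obtain ⟨h1, h2⟩ := hv
      rw [ZMod.intCast_zmod_eq_zero_iff_dvd] at h1 h2
      obtain ⟨c₀, hc₀⟩ := Int.natAbs_dvd.mp h1
      obtain ⟨c₁, hc₁⟩ := Int.natAbs_dvd.mp h2
      refine ⟨![c₀, c₁], ?_⟩
      rw [hmv]
      funext i
      fin_cases i <;> simp [hc₀, hc₁]
  have hsurj : Function.Surjective f := by
    rintro ⟨x, y⟩
    obtain ⟨i, hi⟩ := ZMod.intCast_surjective x
    obtain ⟨j, hj⟩ := ZMod.intCast_surjective y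
    exact ⟨![i, j], by rw [hval]; simp [hi, hj]⟩
  exact (Submodule.quotEquivOfEq _ _ hker).trans (f.quotKerEquivOfSurjective hsurj)

lemma snf_matrix (g A' m' x y : ℤ) (hbez : A' * x + m' * y = 1) :
    !![(1:ℤ), 0; -(m' * x), 1] * !![g * A', g * m'; g * m', 0] * !![x, -m'; y, A'] =
      !![g, 0; 0, -(g * m' ^ 2)] := by
  ext i j
  fin_cases i <;> fin_cases j
  · simp [Matrix.mul_apply, Fin.sum_univ_two]; linear_combination g * hbez
  · simp [Matrix.mul_apply, Fin.sum_univ_two]; ring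
  · simp [Matrix.mul_apply, Fin.sum_univ_two]; linear_combination -(g * m' * x) * hbez
  · simp [Matrix.mul_apply, Fin.sum_univ_two]; ring

lemma unit_lower (c : ℤ) : !![(1:ℤ), 0; -c, 1] * !![(1:ℤ), 0; c, 1] = 1 := by
  ext i j
  fin_cases i <;> fin_cases j <;>
    simp [Matrix.mul_apply, Fin.sum_univ_two, Matrix.one_apply]

lemma unit_lower' (c : ℤ) : !![(1:ℤ), 0; c, 1] * !![(1:ℤ), 0; -c, 1] = 1 := by
  ext i j
  fin_cases i <;> fin_cases j <;>
    simp [Matrix.mul_apply, Fin.sum_univ_two, Matrix.one_apply]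

lemma unit_V (A' m' x y : ℤ) (hbez : A' * x + m' * y = 1) :
    !![x, -m'; y, A'] * !![A', m'; -y, x] = 1 := by
  ext i j
  fin_cases i <;> fin_cases j
  · simp [Matrix.mul_apply, Fin.sum_univ_two, Matrix.one_apply]; linear_combination hbez
  · simp [Matrix.mul_apply, Fin.sum_univ_two, Matrix.one_apply]; ring
  · simp [Matrix.mul_apply, Fin.sum_univ_two, Matrix.one_apply]; ring
  · simp [Matrix.mul_apply, Fin.sum_univ_two, Matrix.one_apply]; linear_combination hbez

/-- Smith normal form of the coker of `!![A, m; m, 0]`. -/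
noncomputable def snfEquiv (A m : ℤ) (hm : m ≠ 0) :
    intCoker !![A, m; m, 0] ≃ₗ[ℤ]
      (ZMod (Int.gcd A m) × ZMod (m.natAbs ^ 2 / Int.gcd A m)) := by
  set G : ℕ := Int.gcd A m with hG
  set g : ℤ := (G : ℤ) with hg
  have hg0 : g ≠ 0 := by
    simp only [hg, ne_eq, Int.natCast_eq_zero, hG]
    rw [Int.gcd_eq_zero_iff]
    tauto
  set A' : ℤ := A / g with hA'
  set m' : ℤ := m / g with hm'def
  have hA : A = g * A' := (Int.mul_ediv_cancel' (Int.gcd_dvd_left A m)).symm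
  have hm' : m = g * m' := (Int.mul_ediv_cancel' (Int.gcd_dvd_right A m)).symm
  set x := Int.gcdA A m with hx
  set y := Int.gcdB A m with hy
  have bezout : g = A * x + m * y := Int.gcd_eq_gcd_ab A m
  rw [hA, hm'] at bezout
  have hbez : A' * x + m' * y = 1 := by
    apply mul_left_cancel₀ hg0
    rw [mul_one]
    linear_combination -bezout
  have hM : !![A, m; m, 0] = !![g * A', g * m'; g * m', 0] := by rw [← hA, ← hm']
  have h2 : ((-(g * m' ^ 2)).natAbs) = m.natAbs ^ 2 / G := by
    have hmn : m.natAbs = G * m'.natAbs := by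
      rw [hm', Int.natAbs_mul, hg, Int.natAbs_natCast]
    have hGn : G ≠ 0 := fun h => hg0 (by rw [hg, h]; rfl)
    rw [Int.natAbs_neg, Int.natAbs_mul, Int.natAbs_pow, hg, Int.natAbs_natCast, hmn]
    symm
    apply Nat.div_eq_of_eq_mul_left (Nat.pos_of_ne_zero hGn)
    ring
  have h1 : g.natAbs = G := Int.natAbs_natCast G
  rw [← h2, ← h1, hM]
  exact (cokerEquiv _ _ !![(1:ℤ), 0; -(m' * x), 1] !![x, -m'; y, A']
      !![(1:ℤ), 0; m' * x, 1] !![A', m'; -y, x]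
      (unit_lower _) (unit_lower' _) (unit_V _ _ _ _ hbez)
      (snf_matrix g A' m' x y hbez)).trans (cokerDiagEquiv g (-(g * m' ^ 2)))

lemma gcd_dvd_natAbs_right' (A m : ℤ) : Int.gcd A m ∣ m.natAbs := by
  have := Int.natAbs_dvd_natAbs.mpr (Int.gcd_dvd_right (a := A) (b := m))
  simpa using this

lemma gcd_dvd_msq (A m : ℤ) : Int.gcd A m ∣ m.natAbs ^ 2 / Int.gcd A m := by
  obtain ⟨k, hk⟩ : Int.gcd A m ∣ m.natAbs := gcd_dvd_natAbs_right' A m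
  rcases Nat.eq_zero_or_pos (Int.gcd A m) with h | h
  · simp [h]
  · rw [hk]
    have : (Int.gcd A m * k) ^ 2 / Int.gcd A m = Int.gcd A m * k ^ 2 :=
      Nat.div_eq_of_eq_mul_left h (by ring)
    rw [this]
    exact Dvd.intro _ rfl

lemma exponent_coker (A m : ℤ) (hm : m ≠ 0) :
    AddMonoid.exponent (intCoker !![A, m; m, 0]) = m.natAbs ^ 2 / Int.gcd A m := by
  rw [AddMonoid.exponent_eq_of_addEquiv (snfEquiv A m hm).toAddEquiv,
    AddMonoid.exponent_prod, ZMod.exponent, ZMod.exponent]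
  exact dvd_antisymm (lcm_dvd (gcd_dvd_msq A m) dvd_rfl) (dvd_lcm_right _ _)

/-- Let `ε = ±1`, let `H` be the cokernel of `[[2a, 2b+1],[2b+1, 0]]` and `H'` the cokernel
of `[[2a-2ε, 2b+1],[2b+1, 0]]`. If `H ≅ H'` as additive groups, then `H` is a finite cyclic
group of order `(2b+1)²`. -/
theorem coker_cyclic_of_iso (a b ε : ℤ) (hε : ε = 1 ∨ ε = -1)
    (h : Nonempty (intCoker !![2*a, 2*b+1; 2*b+1, 0] ≃+
      intCoker !![2*a - 2*ε, 2*b+1; 2*b+1, 0])) :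
    IsAddCyclic (intCoker !![2*a, 2*b+1; 2*b+1, 0]) ∧
      Finite (intCoker !![2*a, 2*b+1; 2*b+1, 0]) ∧
      Nat.card (intCoker !![2*a, 2*b+1; 2*b+1, 0]) = ((2*b+1)^2).natAbs := by
  obtain ⟨e⟩ := h
  set m : ℤ := 2*b+1 with hmdef
  have hm : m ≠ 0 := by omega
  set G : ℕ := Int.gcd (2*a) m with hG
  set G' : ℕ := Int.gcd (2*a - 2*ε) m with hG'
  have hN0 : m.natAbs ^ 2 ≠ 0 := pow_ne_zero 2 (Int.natAbs_ne_zero.mpr hm)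
  -- exponents agree, hence G = G'
  have hexp : m.natAbs ^ 2 / G = m.natAbs ^ 2 / G' := by
    rw [hG, hG', ← exponent_coker (2*a) m hm, ← exponent_coker (2*a - 2*ε) m hm]
    exact AddMonoid.exponent_eq_of_addEquiv e
  have hGdvd : G ∣ m.natAbs ^ 2 :=
    dvd_trans (gcd_dvd_natAbs_right' _ _) (dvd_pow_self _ (by norm_num))
  have hG'dvd : G' ∣ m.natAbs ^ 2 :=
    dvd_trans (gcd_dvd_natAbs_right' _ _) (dvd_pow_self _ (by norm_num))
  have hGG' : G = G' := by
    rw [← Nat.div_div_self hGdvd hN0, hexp, Nat.div_div_self hG'dvd hN0]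
  -- G divides 2ε, and G is odd, so G = 1
  have hdvd2 : (G : ℤ) ∣ 2 * ε := by
    have d1 : (G : ℤ) ∣ 2 * a := Int.gcd_dvd_left (2*a) m
    have d2 : (G : ℤ) ∣ 2 * a - 2 * ε := by rw [hGG']; exact Int.gcd_dvd_left (2*a - 2*ε) m
    have := dvd_sub d1 d2
    simpa using this
  have hdvdm : (G : ℤ) ∣ m := Int.gcd_dvd_right (2*a) m
  have hG1 : G = 1 := by
    have h2 : (G : ℤ) ∣ 2 := by
      rcases hε with rfl | rfl
      · simpa using hdvd2
      · exact (dvd_neg.mp (by simpa using hdvd2))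
    have hGle : G ∣ 2 := by
      have := Int.natAbs_dvd_natAbs.mpr h2
      simpa using this
    rcases (Nat.dvd_prime Nat.prime_two).mp hGle with h1 | h2
    · exact h1
    · exfalso
      rw [h2] at hdvdm
      obtain ⟨c, hc⟩ := hdvdm
      omega
  -- conclude
  have e1 := (snfEquiv (2*a) m hm).toAddEquiv
  rw [← hG, hG1, Nat.div_one] at e1
  have hK : NeZero (m.natAbs ^ 2) := ⟨hN0⟩
  refine ⟨?_, ?_, ?_⟩
  · have hs : Function.Surjective (AddMonoidHom.inr (ZMod 1) (ZMod (m.natAbs ^ 2))) := by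
      intro p
      refine ⟨p.2, ?_⟩
      have : (0 : ZMod 1) = p.1 := Subsingleton.elim _ _
      show ((0 : ZMod 1), p.2) = p
      rw [this]
    refine isAddCyclic_of_surjective
      (e1.symm.toAddMonoidHom.comp (AddMonoidHom.inr (ZMod 1) (ZMod (m.natAbs ^ 2)))) ?_
    rw [AddMonoidHom.coe_comp]
    exact e1.symm.surjective.comp hs
  · exact Finite.of_equiv _ e1.symm.toEquiv
  · rw [Nat.card_congr e1.toEquiv, Nat.card_prod, Nat.card_zmod, Nat.card_zmod,
      one_mul, ← Int.natAbs_pow]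
end

section
/- Let n, b ∈ ℤ. If the Laurent polynomials -n·(t² + 1) + (1 + 2n)·t and b(b+1)·(t² + 1) - (b² + (b+1)²)·t are associated in ℤ[t, t⁻¹] (i.e., differ by multiplication by a unit ±tᵏ), then n = b(b+1). In particular n is even and n ≥ 0. -/
open LaurentPolynomial

noncomputable def whiteheadEv : ℤ[T;T⁻¹] →ₐ[ℤ] ℤ :=
  AddMonoidAlgebra.lift ℤ ℤ ℤ ((Units.coeHom ℤ).comp (zpowersHom ℤˣ (-1)))

lemma whiteheadEv_C (a : ℤ) : whiteheadEv (C a) = a := by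
  simp [whiteheadEv, LaurentPolynomial.C, AddMonoidAlgebra.singleZeroRingHom]

lemma whiteheadEv_T (k : ℤ) : whiteheadEv (T k) = ((-1:ℤˣ)^k : ℤˣ) := by
  rw [show (T k : ℤ[T;T⁻¹]) = AddMonoidAlgebra.single k 1 from rfl, whiteheadEv,
    AddMonoidAlgebra.lift_single]
  simp [zpowersHom_apply]

/-- If the Laurent polynomials `-n(t²+1) + (1+2n)t` and `b(b+1)(t²+1) - (b²+(b+1)²)t` are
associated in `ℤ[t,t⁻¹]` (differ by multiplication by a unit `±tᵏ`), then `n = b(b+1)`;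
in particular `n` is even and `n ≥ 0`. -/
theorem whitehead_alexander_assoc (n b : ℤ)
    (h : Associated (C (-n) * (T 2 + 1) + C (1 + 2 * n) * T 1 : ℤ[T;T⁻¹])
      (C (b * (b + 1)) * (T 2 + 1) - C (b ^ 2 + (b + 1) ^ 2) * T 1)) :
    n = b * (b + 1) ∧ Even n ∧ 0 ≤ n := by
  obtain ⟨u, hu⟩ := h
  have h1 := congrArg whiteheadEv hu
  simp only [map_add, map_sub, map_mul, map_one, whiteheadEv_C, whiteheadEv_T] at h1
  norm_num at h1
  have hunit : IsUnit (whiteheadEv (u : ℤ[T;T⁻¹])) := u.isUnit.map whiteheadEv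
  rw [Int.isUnit_iff] at hunit
  have h2 : ((b:ℤ)+1)^2 = b*(b+1) + (b+1) := by ring
  have h3 : (b:ℤ)^2 = b*(b+1) - b := by ring
  rw [h2, h3] at h1
  have hn : n = b * (b + 1) := by
    rcases hunit with h' | h' <;> rw [h'] at h1 <;>
      (generalize b * (b + 1) = m at h1 ⊢) <;> omega
  exact ⟨hn, hn ▸ Int.even_mul_succ_self b, hn ▸ by nlinarith [sq_nonneg (2*b+1)]⟩
end

section
/- Let n ∈ ℤ with n < 0, or let n ∈ ℤ with n odd. Then there is no b ∈ ℤ such that the Laurent polynomial -n·(t² + 1) + (1 + 2n)·t is associated in ℤ[t, t⁻¹] to b(b+1)·(t² + 1) - (b² + (b+1)²)·t. -/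
open LaurentPolynomial

/-- Evaluation of an integer Laurent polynomial at `-1`. -/
noncomputable def evNegOne : ℤ[T;T⁻¹] →+* ℤ :=
  AddMonoidAlgebra.liftNCRingHom (RingHom.id ℤ)
    ((Units.coeHom ℤ).comp (zpowersHom ℤˣ (-1))) (fun _ _ => Commute.all _ _)

lemma evNegOne_C (a : ℤ) : evNegOne (C a) = a := by
  show AddMonoidAlgebra.liftNC _ _ (AddMonoidAlgebra.single 0 a : ℤ[T;T⁻¹]) = a
  rw [AddMonoidAlgebra.liftNC_single]
  simp

lemma evNegOne_T (k : ℤ) : evNegOne (T k) = ((((-1 : ℤˣ) ^ k : ℤˣ)) : ℤ) := by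
  show AddMonoidAlgebra.liftNC _ _ (AddMonoidAlgebra.single k 1 : ℤ[T;T⁻¹]) = _
  rw [AddMonoidAlgebra.liftNC_single]
  simp [zpowersHom_apply]

lemma evNegOne_T1 : evNegOne (T 1) = -1 := by
  rw [evNegOne_T]; norm_num

lemma evNegOne_T2 : evNegOne (T 2) = 1 := by
  have : (2 : ℤ) = 1 + 1 := by norm_num
  rw [evNegOne_T, this, zpow_add, zpow_one]
  norm_num

/-- If `n < 0` or `n` is odd, then there is no `b ∈ ℤ` such that the Laurent polynomial
`-n(t²+1) + (1+2n)t` is associated in `ℤ[t,t⁻¹]` to `b(b+1)(t²+1) - (b²+(b+1)²)t`. -/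
theorem whitehead_no_cosmetic_form (n : ℤ) (hn : n < 0 ∨ Odd n) :
    ∀ b : ℤ, ¬ Associated (C (-n) * (T 2 + 1) + C (1 + 2 * n) * T 1 : ℤ[T;T⁻¹])
      (C (b * (b + 1)) * (T 2 + 1) - C (b ^ 2 + (b + 1) ^ 2) * T 1) := by
  intro b hassoc
  have h := hassoc.map evNegOne
  have hp : evNegOne (C (-n) * (T 2 + 1) + C (1 + 2 * n) * T 1 : ℤ[T;T⁻¹]) = -4 * n - 1 := by
    simp [evNegOne_C, evNegOne_T1, evNegOne_T2, map_ofNat]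
    ring
  have hq : evNegOne (C (b * (b + 1)) * (T 2 + 1) - C (b ^ 2 + (b + 1) ^ 2) * T 1 : ℤ[T;T⁻¹])
      = 4 * b ^ 2 + 4 * b + 1 := by
    simp [evNegOne_C, evNegOne_T1, evNegOne_T2, map_ofNat]
    ring
  rw [hp, hq, Int.associated_iff] at h
  have hb2 : 0 ≤ b ^ 2 + b := by nlinarith [sq_nonneg (2 * b + 1)]
  rcases h with h | h
  · omega
  · have hn' : n = b ^ 2 + b := by omega
    rcases hn with hlt | hodd
    · omega
    · have : Even (b ^ 2 + b) := by
        have := Int.even_mul_succ_self b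
        have hb : b * (b + 1) = b ^ 2 + b := by ring
        rwa [hb] at this
      rw [hn'] at hodd
      exact (Int.not_odd_iff_even.mpr this) hodd
end
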